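/- arXiv:2206.03688 — 2 statements merged into one kernel-verified Lean document; each statement's English description precedes it below -/
import Mathlib

section
/- For any W, W̃ ∈ ℝ^{d×m} and any points x₁,…,x_n ∈ S^{d−1}(√d), max_{i∈[n]} |⟨∇_W f(x_i;W), W̃⟩| ≤ C·( n^{1/2}·(E_n[(f_L(x;W̃))²])^{1/2} + d·n^{1/2}·m^{−1/2}·‖W‖_F·‖W̃‖_F ) for an absolute constant C, where ⟨·,·⟩ is the Frobenius inner product. -/
/-!
The directional derivative `⟨∇_W f(x;W), W̃⟩` is `f_L(x;W̃)` plus the error made by replacing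
`σ′(w_{0,r}·x + w_r·x)` with `σ′(w_{0,r}·x)` in every neuron. A single `f_L(x_i;W̃)²` is at most
`n · E_n[f_L²]`. Since `σ′` is 1-Lipschitz, neuron `r` contributes at most
`m^{-1/2} |w_r·x| |w̃_r·x| ≤ m^{-1/2} ‖x‖² ‖w_r‖ ‖w̃_r‖`, and Cauchy–Schwarz over `r` with
`‖x‖² = d` bounds the error by `d m^{-1/2} ‖W‖_F ‖W̃‖_F`; `n ≥ 1` then gives the claim with `C = 1`.
-/

open MeasureTheory Finset
open scoped ENNReal NNReal

noncomputable section

namespace NTKQuad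

/-- Euclidean dot product of two finitely-indexed real vectors. -/
def dot {α : Type*} [Fintype α] (u v : α → ℝ) : ℝ := ∑ j, u j * v j

/-- Squared Euclidean norm. -/
def sq2 {α : Type*} [Fintype α] (u : α → ℝ) : ℝ := ∑ j, (u j) ^ 2

/-- Frobenius norm of a weight matrix, viewed as the family of its columns. -/
def frob {ι δ : Type*} [Fintype ι] [Fintype δ] (W : ι → δ → ℝ) : ℝ :=
  Real.sqrt (∑ r, sq2 (W r))

/-- `‖W‖_{2,4}^4 = ∑_r ‖w_r‖₂⁴`. -/
def n244 {ι δ : Type*} [Fintype ι] [Fintype δ] (W : ι → δ → ℝ) : ℝ :=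
  ∑ r, (sq2 (W r)) ^ 2

/-- `‖W‖_{2,4}`. -/
def n24 {ι δ : Type*} [Fintype ι] [Fintype δ] (W : ι → δ → ℝ) : ℝ :=
  n244 W ^ ((1 : ℝ) / 4)

/-- `‖W‖_{2,∞} = max_r ‖w_r‖₂`. -/
def n2inf {ι δ : Type*} [Fintype ι] [Fintype δ] (W : ι → δ → ℝ) : ℝ :=
  ⨆ r, Real.sqrt (sq2 (W r))

/-- `μ` is the uniform probability measure on the centered sphere of squared radius `c` in `ℝ^d`:
it is a probability measure, it is carried by the sphere, and it is invariant under every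
orthogonal transformation. -/
def IsUniformSphere {d : ℕ} (μ : Measure (Fin d → ℝ)) (c : ℝ) : Prop :=
  IsProbabilityMeasure μ ∧ (∀ᵐ x ∂μ, sq2 x = c) ∧
    ∀ A ∈ Matrix.orthogonalGroup (Fin d) ℝ, μ.map (fun x => A.mulVec x) = μ

/-- The two-layer network `f(x;W)`. -/
def fnet {d : ℕ} {ι : Type*} [Fintype ι] (a : ι → ℝ) (W0 : ι → Fin d → ℝ) (act : ℝ → ℝ)
    (W : ι → Fin d → ℝ) (x : Fin d → ℝ) : ℝ :=
  (Real.sqrt (Fintype.card ι))⁻¹ * ∑ r, a r * act (dot (W0 r) x + dot (W r) x)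

/-- The linear (NTK) term `f_L(x;W)`; `act'` plays the role of `σ′`. -/
def fL {d : ℕ} {ι : Type*} [Fintype ι] (a : ι → ℝ) (W0 : ι → Fin d → ℝ) (act' : ℝ → ℝ)
    (W : ι → Fin d → ℝ) (x : Fin d → ℝ) : ℝ :=
  (Real.sqrt (Fintype.card ι))⁻¹ * ∑ r, a r * act' (dot (W0 r) x) * dot (W r) x

/-- The quadratic (QuadNTK) term `f_Q(x;W)`; `act''` plays the role of `σ″`. -/
def fQ {d : ℕ} {ι : Type*} [Fintype ι] (a : ι → ℝ) (W0 : ι → Fin d → ℝ) (act'' : ℝ → ℝ)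
    (W : ι → Fin d → ℝ) (x : Fin d → ℝ) : ℝ :=
  (2 * Real.sqrt (Fintype.card ι))⁻¹ * ∑ r, a r * act'' (dot (W0 r) x) * (dot (W r) x) ^ 2

/-- Second-layer weights of the symmetric initialization: `+1` on the first half,
`-1` on the second half. The width is `m = 2M` and neurons are indexed by `Fin 2 × Fin M`. -/
def aSym (M : ℕ) : Fin 2 × Fin M → ℝ := fun p => if p.1 = 0 then 1 else -1

/-- First-layer weights of the symmetric initialization, duplicating `u`. -/
def W0Sym {d : ℕ} (M : ℕ) (u : Fin M → Fin d → ℝ) : Fin 2 × Fin M → Fin d → ℝ :=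
  fun p => u p.2

/-- `B(d,ℓ)`, the dimension of degree-`ℓ` spherical harmonics. -/
def Bdim (d ℓ : ℕ) : ℕ :=
  if ℓ = 0 then 1 else ((2 * ℓ + d - 2) * Nat.choose (ℓ + d - 3) (ℓ - 1)) / ℓ

/-- `n_k = ∑_{ℓ ≤ k} B(d,ℓ)`. -/
def nk (d k : ℕ) : ℕ := ∑ ℓ ∈ Finset.range (k + 1), Bdim d ℓ

/-- The NTK feature map `φ(x) ∈ ℝ^{m d}`. -/
def phi {d : ℕ} {ι : Type*} [Fintype ι] (a : ι → ℝ) (W0 : ι → Fin d → ℝ) (act' : ℝ → ℝ)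
    (x : Fin d → ℝ) : ι × Fin d → ℝ :=
  fun p => (Real.sqrt (Fintype.card ι))⁻¹ * a p.1 * act' (dot (W0 p.1) x) * x p.2

/-- The feature covariance matrix `Σ = E_μ[φ(x)φ(x)ᵀ]`. -/
def SigmaMat {d : ℕ} {ι : Type*} [Fintype ι] (μ : Measure (Fin d → ℝ))
    (a : ι → ℝ) (W0 : ι → Fin d → ℝ) (act' : ℝ → ℝ) :
    Matrix (ι × Fin d) (ι × Fin d) ℝ :=
  Matrix.of fun p q => ∫ x, phi a W0 act' x p * phi a W0 act' x q ∂μ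

/-- `(lam, v)` is an orthonormal eigendecomposition of the symmetric matrix `A`
with eigenvalues sorted in decreasing order. -/
def IsEigenDecomp {β : Type*} [Fintype β] [DecidableEq β] (A : Matrix β β ℝ)
    (lam : Fin (Fintype.card β) → ℝ) (v : Fin (Fintype.card β) → β → ℝ) : Prop :=
  Antitone lam ∧ (∀ i j, dot (v i) (v j) = if i = j then (1 : ℝ) else 0) ∧
    (∀ i, A.mulVec (v i) = lam i • v i) ∧
    (∑ i, Matrix.vecMulVec (v i) (v i)) = (1 : Matrix β β ℝ)

/-- Orthogonal projection onto the span of the first `r` (sorted) eigenvectors. -/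
def projTop {β : Type*} [Fintype β] [DecidableEq β]
    (v : Fin (Fintype.card β) → β → ℝ) (r : ℕ) : Matrix β β ℝ :=
  ∑ i ∈ Finset.univ.filter (fun i : Fin (Fintype.card β) => (i : ℕ) < r),
    Matrix.vecMulVec (v i) (v i)

/-- Apply an `md × md` matrix to (the vectorization of) a weight matrix. -/
def applyMat {d : ℕ} {ι : Type*} [Fintype ι] (P : Matrix (ι × Fin d) (ι × Fin d) ℝ)
    (W : ι → Fin d → ℝ) : ι → Fin d → ℝ :=
  fun r j => P.mulVec (fun p => W p.1 p.2) (r, j)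

/-- The coordinate direction `e_{r,j}` in weight space. -/
def coordE {d : ℕ} {ι : Type*} [DecidableEq ι] (r : ι) (j : Fin d) : ι → Fin d → ℝ :=
  fun r' j' => if r' = r ∧ j' = j then 1 else 0

/-- The gradient of `F` at `W`, whose `(r,j)` entry is the partial derivative of `F`
in the coordinate direction `e_{r,j}`. -/
def gradAt {d : ℕ} {ι : Type*} [Fintype ι] [DecidableEq ι]
    (F : (ι → Fin d → ℝ) → ℝ) (W : ι → Fin d → ℝ) : ι → Fin d → ℝ :=
  fun r j => deriv (fun t : ℝ => F (W + t • coordE r j)) 0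

/-- Frobenius inner product of weight matrices. -/
def dotW {d : ℕ} {ι : Type*} [Fintype ι] (A B : ι → Fin d → ℝ) : ℝ :=
  ∑ r, dot (A r) (B r)

/-- Hessian quadratic form `∇²F(W)[A,A]`, as the second derivative of `t ↦ F(W + tA)` at `0`. -/
def hessForm {d : ℕ} {ι : Type*} [Fintype ι]
    (F : (ι → Fin d → ℝ) → ℝ) (W A : ι → Fin d → ℝ) : ℝ :=
  iteratedDeriv 2 (fun t : ℝ => F (W + t • A)) 0

/-- `±1` vector associated to a boolean sign pattern. -/
def signv {ι : Type*} (s : ι → Bool) : ι → ℝ := fun r => if s r then 1 else -1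

/-- `W S`: rescale the `r`-th column of `W` by the sign `s r`. -/
def colScale {d : ℕ} {ι : Type*} (s : ι → Bool) (W : ι → Fin d → ℝ) : ι → Fin d → ℝ :=
  fun r j => signv s r * W r j

/-- Expectation over a uniformly random diagonal `±1` sign matrix `S`. -/
def ESavg {ι : Type*} [Fintype ι] [DecidableEq ι] (g : (ι → Bool) → ℝ) : ℝ :=
  (∑ s : ι → Bool, g s) / (Fintype.card (ι → Bool) : ℝ)

/-- The `ℓ`-th coefficient of `g` in the orthonormal Hermite basis of `L²(N(0,1))`. -/
def hermCoeff (g : ℝ → ℝ) (ℓ : ℕ) : ℝ :=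
  ∫ t, g t * (Polynomial.aeval t (Polynomial.hermite ℓ) / Real.sqrt (Nat.factorial ℓ))
    ∂(ProbabilityTheory.gaussianReal 0 1)

/-- Assumption A: `μ_ℓ(g) ≠ 0` for all `ℓ ≤ 4k`, and `∑_{ℓ > 4k} μ_ℓ(g)² > 0`. -/
def AssumptionA (g : ℝ → ℝ) (k : ℕ) : Prop :=
  (∀ ℓ ≤ 4 * k, hermCoeff g ℓ ≠ 0) ∧ (∃ ℓ, 4 * k < ℓ ∧ hermCoeff g ℓ ≠ 0)

/-- `Q` is the family of Gegenbauer polynomials for dimension `d`: `Q ℓ` has degree `ℓ`,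
is normalized by `Q ℓ (d) = 1`, and the family is orthogonal with
`⟨Q i, Q j⟩ = δ_{ij}/B(d,i)` with respect to `τ`, the law of `⟨x,e⟩` for `x` uniform
on the sphere of radius `√d`. -/
def IsGegenbauer (d : ℕ) (τ : Measure ℝ) (Q : ℕ → Polynomial ℝ) : Prop :=
  (∀ ℓ, (Q ℓ).natDegree = ℓ) ∧ (∀ ℓ, (Q ℓ).eval (d : ℝ) = 1) ∧
    ∀ i j, (∫ t, (Q i).eval (Real.sqrt d * t) * (Q j).eval (Real.sqrt d * t) ∂τ) =
      if i = j then ((Bdim d i : ℝ))⁻¹ else 0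

/-- The Gegenbauer coefficient `λ_{d,ℓ}(g)`. -/
def gegCoeff (d : ℕ) (τ : Measure ℝ) (Q : ℕ → Polynomial ℝ) (g : ℝ → ℝ) (ℓ : ℕ) : ℝ :=
  ∫ t, g t * (Q ℓ).eval (Real.sqrt d * t) ∂τ

/-- Assumption B: `d^{k−1}·min_{ℓ ≤ k−1} λ_{d,ℓ}(g)² ≥ c₀`. -/
def AssumptionB (d k : ℕ) (τ : Measure ℝ) (Q : ℕ → Polynomial ℝ) (g : ℝ → ℝ) (c₀ : ℝ) : Prop :=
  ∀ ℓ < k, c₀ ≤ (d : ℝ) ^ (k - 1) * (gegCoeff d τ Q g ℓ) ^ 2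

/-- The product Gaussian measure on `d × m` matrices with entrywise variance `v`. -/
def gaussMat (ι : Type*) [Fintype ι] (d : ℕ) (v : NNReal) : Measure (ι → Fin d → ℝ) :=
  Measure.pi fun _ : ι => Measure.pi fun _ : Fin d => ProbabilityTheory.gaussianReal 0 v

/-- `P` is the law of an i.i.d. sequence with common marginal `Q`. -/
def IsIIDSeq {γ : Type*} [MeasurableSpace γ] (P : Measure (ℕ → γ)) (Q : Measure γ) : Prop :=
  IsProbabilityMeasure P ∧
    ∀ T : ℕ, P.map (fun ξ (i : Fin T) => ξ (i : ℕ)) = Measure.pi fun _ : Fin T => Q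

/-- Perturbed gradient descent iterates, started at `0`. -/
def pgd {d : ℕ} {ι : Type*} [Fintype ι] [DecidableEq ι]
    (F : (ι → Fin d → ℝ) → ℝ) (η : ℝ) (ξ : ℕ → ι → Fin d → ℝ) : ℕ → ι → Fin d → ℝ
  | 0 => 0
  | t + 1 => pgd F η ξ t - η • (gradAt F (pgd F η ξ t) + ξ t)

/-- Empirical average of `n` numbers. -/
def Eemp {n : ℕ} (g : Fin n → ℝ) : ℝ := (n : ℝ)⁻¹ * ∑ i, g i


/-- `⟨∇_W f(x;W), W̃⟩`, the directional derivative of the network in direction `W̃`. -/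
def dft {d : ℕ} {ι : Type*} [Fintype ι] (a : ι → ℝ) (W0 : ι → Fin d → ℝ) (σ' : ℝ → ℝ)
    (W Wt : ι → Fin d → ℝ) (x : Fin d → ℝ) : ℝ :=
  (Real.sqrt (Fintype.card ι))⁻¹ * ∑ r, a r * σ' (dot (W0 r) x + dot (W r) x) * dot (Wt r) x

section

variable {α : Type*} [Fintype α]

lemma sq2_nonneg (u : α → ℝ) : 0 ≤ sq2 u :=
  Finset.sum_nonneg fun _ _ => sq_nonneg _

lemma abs_dot_le (u v : α → ℝ) : |dot u v| ≤ √(sq2 u) * √(sq2 v) := by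
  rw [← Real.sqrt_mul (sq2_nonneg u)]
  exact Real.abs_le_sqrt (Finset.sum_mul_sq_le_sq_mul_sq _ _ _)

lemma sum_sqrt_sq2_mul_sqrt_sq2_le_frob {δ : Type*} [Fintype δ] (W Wt : α → δ → ℝ) :
    ∑ r, √(sq2 (W r)) * √(sq2 (Wt r)) ≤ frob W * frob Wt :=
  Real.sum_sqrt_mul_sqrt_le _ (fun r => sq2_nonneg (W r)) (fun r => sq2_nonneg (Wt r))

lemma abs_le_sqrt_card_mul_sqrt_Eemp_sq {n : ℕ} (g : Fin n → ℝ) (i : Fin n) :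
    |g i| ≤ √n * √(Eemp fun j => g j ^ 2) := by
  have hn : (n : ℝ) ≠ 0 := by exact_mod_cast i.pos.ne'
  rw [← Real.sqrt_mul n.cast_nonneg, Eemp, ← mul_assoc, mul_inv_cancel₀ hn, one_mul]
  exact Real.abs_le_sqrt (Finset.single_le_sum (fun j _ => sq_nonneg (g j)) (Finset.mem_univ i))

lemma dft_sub_fL {d : ℕ} (a : α → ℝ) (W0 : α → Fin d → ℝ) (σ' : ℝ → ℝ)
    (W Wt : α → Fin d → ℝ) (x : Fin d → ℝ) :
    dft a W0 σ' W Wt x - fL a W0 σ' Wt x = (√(Fintype.card α))⁻¹ *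
      ∑ r, a r * (σ' (dot (W0 r) x + dot (W r) x) - σ' (dot (W0 r) x)) * dot (Wt r) x := by
  simp only [dft, fL, ← mul_sub, ← Finset.sum_sub_distrib]
  congr 1
  exact Finset.sum_congr rfl fun _ _ => by ring

lemma abs_dft_sub_fL_le {d : ℕ} {K : ℝ≥0} {a : α → ℝ} {σ' : ℝ → ℝ} (ha : ∀ r, |a r| ≤ 1)
    (hσ' : LipschitzWith K σ') (W0 W Wt : α → Fin d → ℝ) (x : Fin d → ℝ) :
    |dft a W0 σ' W Wt x - fL a W0 σ' Wt x| ≤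
      K * (√(Fintype.card α))⁻¹ * sq2 x * (frob W * frob Wt) := by
  have hx : √(sq2 x) * √(sq2 x) = sq2 x := Real.mul_self_sqrt (sq2_nonneg x)
  have hterm : ∀ r, |a r * (σ' (dot (W0 r) x + dot (W r) x) - σ' (dot (W0 r) x)) *
      dot (Wt r) x| ≤ K * sq2 x * (√(sq2 (W r)) * √(sq2 (Wt r))) := fun r => by
    have hlip : |σ' (dot (W0 r) x + dot (W r) x) - σ' (dot (W0 r) x)| ≤ K * |dot (W r) x| := by
      simpa [Real.dist_eq] using hσ'.dist_le_mul (dot (W0 r) x + dot (W r) x) (dot (W0 r) x)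
    calc _ = |a r| * |σ' (dot (W0 r) x + dot (W r) x) - σ' (dot (W0 r) x)| *
          |dot (Wt r) x| := by rw [abs_mul, abs_mul]
      _ ≤ 1 * (K * (√(sq2 (W r)) * √(sq2 x))) * (√(sq2 (Wt r)) * √(sq2 x)) := by
        gcongr
        · exact ha r
        · exact hlip.trans (by gcongr; exact abs_dot_le _ _)
        · exact abs_dot_le _ _
      _ = K * (√(sq2 x) * √(sq2 x)) * (√(sq2 (W r)) * √(sq2 (Wt r))) := by ring
      _ = K * sq2 x * (√(sq2 (W r)) * √(sq2 (Wt r))) := by rw [hx]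
  rw [dft_sub_fL, abs_mul, abs_of_nonneg (by positivity)]
  calc _ ≤ (√(Fintype.card α))⁻¹ * ∑ r, K * sq2 x * (√(sq2 (W r)) * √(sq2 (Wt r))) := by
        gcongr
        exact (Finset.abs_sum_le_sum_abs _ _).trans (Finset.sum_le_sum fun r _ => hterm r)
    _ ≤ (√(Fintype.card α))⁻¹ * (K * sq2 x * (frob W * frob Wt)) := by
        rw [← Finset.mul_sum]
        have := sq2_nonneg x
        gcongr
        exact sum_sqrt_sq2_mul_sqrt_sq2_le_frob W Wt
    _ = _ := by ring

end

/-- `max_i |⟨∇_W f(x_i;W), W̃⟩| ≤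
C (√n (E_n[(f_L(x;W̃))²])^{1/2} + d √n m^{−1/2} ‖W‖_F ‖W̃‖_F)`. -/
theorem statement14 :
    ∃ C : ℝ, 0 < C ∧
      ∀ (d m n : ℕ) (a : Fin m → ℝ) (W0 : Fin m → Fin d → ℝ)
        (σ σ' σ'' : ℝ → ℝ) (x : Fin n → Fin d → ℝ) (W Wt : Fin m → Fin d → ℝ),
        2 ≤ d → Even m →
        (∀ r, a r = 1 ∨ a r = -1) → (∀ r, sq2 (W0 r) = 1) →
        (∀ t, HasDerivAt σ (σ' t) t) → (∀ t, HasDerivAt σ' (σ'' t) t) →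
        (∀ t, |σ' t| ≤ 1) → (∀ t, |σ'' t| ≤ 1) →
        (∀ i, sq2 (x i) = (d : ℝ)) →
        ∀ i : Fin n,
          |dft a W0 σ' W Wt (x i)| ≤
            C * (Real.sqrt n * Real.sqrt (Eemp (fun i => (fL a W0 σ' Wt (x i)) ^ 2)) +
              (d : ℝ) * Real.sqrt n * (Real.sqrt m)⁻¹ * frob W * frob Wt) := by
  refine ⟨1, one_pos, fun d m n a W0 σ σ' σ'' x W Wt _ _ ha _ _ hσ' _ hσ'' hx i => ?_⟩
  have ha' : ∀ r, |a r| ≤ 1 := fun r => by rcases ha r with h | h <;> simp [h]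
  have hlip : LipschitzWith 1 σ' :=
    lipschitzWith_of_nnnorm_deriv_le (fun t => (hσ' t).differentiableAt) fun t => by
      rw [(hσ' t).deriv, ← NNReal.coe_le_coe]
      simpa using hσ'' t
  have hn : 1 ≤ √(n : ℝ) := Real.one_le_sqrt.mpr (by exact_mod_cast i.pos)
  have hlin := abs_dft_sub_fL_le ha' hlip W0 W Wt (x i)
  rw [hx i, Fintype.card_fin, NNReal.coe_one, one_mul] at hlin
  have hF : 0 ≤ (√(m : ℝ))⁻¹ * d * (frob W * frob Wt) := by unfold frob; positivity
  calc |dft a W0 σ' W Wt (x i)|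
      ≤ |fL a W0 σ' Wt (x i)| + |dft a W0 σ' W Wt (x i) - fL a W0 σ' Wt (x i)| := by
        linarith [abs_sub_abs_le_abs_sub (dft a W0 σ' W Wt (x i)) (fL a W0 σ' Wt (x i))]
    _ ≤ √n * √(Eemp fun j => fL a W0 σ' Wt (x j) ^ 2) +
        (√(m : ℝ))⁻¹ * d * (frob W * frob Wt) * √n := by
        gcongr
        · exact abs_le_sqrt_card_mul_sqrt_Eemp_sq (fun j => fL a W0 σ' Wt (x j)) i
        · exact hlin.trans (le_mul_of_one_le_right hF hn)
    _ = _ := by ring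

end NTKQuad
end
end

section
/- Suppose the points x₁,…,x_n ∈ S^{d−1}(√d) satisfy ‖E_n[x xᵀ] − I_d‖_op ≤ 1/2. Then for every W ∈ ℝ^{d×m}: E_S[E_n[(f_L(x; WS))²]] ≤ C·‖W‖_F²/m and E_S[E_{x∼μ}[(f_L(x; WS))²]] ≤ C·‖W‖_F²/m for an absolute constant C, where S is uniformly distributed over diagonal ±1 matrices in ℝ^{m×m} and WS denotes the displacement whose r-th column is S_{rr}·w_r. -/
open MeasureTheory Finset
open scoped ENNReal NNReal

noncomputable section

namespace NTKQuad

open scoped Matrix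

/-! Averaging over the random signs kills the cross terms between neurons, since the coordinates
of a uniform sign vector are orthonormal: `E_S f_L(x; WS)² = m⁻¹ ∑_r (a_r σ'(w_{0,r}ᵀx))² (w_rᵀx)²
≤ m⁻¹ ∑_r (w_rᵀx)²`. It remains to bound the second moment of `wᵀx`. For the data it is the
quadratic form `wᵀ E_n[x xᵀ] w ≤ (3/2)‖w‖²`; under `μ` it is exactly `‖w‖²`, because invariance
under coordinate reflections and transpositions forces `E_μ[x xᵀ] = I_d`. Hence `C = 3/2`. -/

section SignAveraging

variable {ι : Type*} [Fintype ι] [DecidableEq ι]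

omit [Fintype ι] [DecidableEq ι] in
lemma signv_mul_self (s : ι → Bool) (r : ι) : signv s r * signv s r = 1 := by
  unfold signv; split <;> norm_num

lemma sum_signv_mul_signv (r r' : ι) :
    ∑ s : ι → Bool, signv s r * signv s r' =
      if r = r' then (Fintype.card (ι → Bool) : ℝ) else 0 := by
  split_ifs with hrr
  · subst hrr
    simp [signv_mul_self]
  · -- flipping the sign at `r` is a bijection of sign patterns that negates each summand
    let flip : Equiv.Perm (ι → Bool) :=
      Function.Involutive.toPerm (fun s => Function.update s r (!s r)) fun s => by
        ext k; by_cases hk : k = r <;> simp [hk]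
    have hflip (s : ι → Bool) :
        signv (flip s) r * signv (flip s) r' = -(signv s r * signv s r') := by
      change signv (Function.update s r (!s r)) r * signv (Function.update s r (!s r)) r' = _
      simp only [signv, Function.update_self, Function.update_of_ne (Ne.symm hrr)]
      cases s r <;> cases s r' <;> norm_num
    have := Equiv.sum_comp flip fun s => signv s r * signv s r'
    simp only [hflip, Finset.sum_neg_distrib] at this
    linarith

lemma ESavg_sq_sum_signv_mul (h : ι → ℝ) :
    ESavg (fun s => (∑ r, signv s r * h r) ^ 2) = ∑ r, h r ^ 2 := by
  have hexpand (s : ι → Bool) : (∑ r, signv s r * h r) ^ 2 =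
      ∑ r, ∑ r', h r * h r' * (signv s r * signv s r') := by
    rw [sq, Finset.sum_mul_sum]
    exact Finset.sum_congr rfl fun r _ => Finset.sum_congr rfl fun r' _ => by ring
  have hcard : (Fintype.card (ι → Bool) : ℝ) ≠ 0 := by positivity
  simp only [ESavg, hexpand]
  rw [Finset.sum_comm]
  simp only [Finset.sum_div]
  refine Finset.sum_congr rfl fun r _ => ?_
  rw [Finset.sum_comm]
  simp only [← Finset.mul_sum, sum_signv_mul_signv, mul_ite, mul_zero, Finset.sum_ite_eq,
    Finset.mem_univ, if_true, ← Finset.sum_div]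
  field_simp

end SignAveraging

section Averages

variable {ι : Type*} [Fintype ι] [DecidableEq ι]

lemma ESavg_const_mul (c : ℝ) (f : (ι → Bool) → ℝ) :
    ESavg (fun s => c * f s) = c * ESavg f := by
  simp only [ESavg, ← Finset.mul_sum, mul_div_assoc]

lemma Eemp_mono {n : ℕ} {f g : Fin n → ℝ} (h : ∀ i, f i ≤ g i) : Eemp f ≤ Eemp g :=
  mul_le_mul_of_nonneg_left (Finset.sum_le_sum fun i _ => h i) (by positivity)

lemma Eemp_const_mul {n : ℕ} (c : ℝ) (f : Fin n → ℝ) : Eemp (fun i => c * f i) = c * Eemp f := by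
  simp only [Eemp, ← Finset.mul_sum]; ring

lemma Eemp_sum {n : ℕ} {κ : Type*} [Fintype κ] (F : κ → Fin n → ℝ) :
    Eemp (fun i => ∑ k, F k i) = ∑ k, Eemp (F k) := by
  simp only [Eemp, Finset.mul_sum]; exact Finset.sum_comm

lemma ESavg_Eemp_comm {n : ℕ} (F : (ι → Bool) → Fin n → ℝ) :
    ESavg (fun s => Eemp (F s)) = Eemp (fun i => ESavg fun s => F s i) := by
  simp only [ESavg, Eemp, div_eq_mul_inv, Finset.sum_mul, Finset.mul_sum]
  rw [Finset.sum_comm]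
  exact Finset.sum_congr rfl fun i _ => Finset.sum_congr rfl fun s _ => by ring

lemma sum_integral_le_integral_of_nonneg {κ α : Type*} [Fintype κ] [MeasurableSpace α]
    {μ : Measure α} {g : κ → α → ℝ} {G : α → ℝ} (hg : ∀ k x, 0 ≤ g k x)
    (hG : Integrable G μ) (hgG : ∀ x, ∑ k, g k x ≤ G x) :
    ∑ k, ∫ x, g k x ∂μ ≤ ∫ x, G x ∂μ := by
  classical
  -- non-integrable summands have integral `0`, so only the integrable ones need to be summed
  set T := Finset.univ.filter fun k => Integrable (g k) μ
  have hT : ∀ k ∈ T, Integrable (g k) μ := fun k hk => (Finset.mem_filter.mp hk).2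
  calc ∑ k, ∫ x, g k x ∂μ = ∑ k ∈ T, ∫ x, g k x ∂μ :=
        (Finset.sum_subset (Finset.subset_univ T) fun k _ hk =>
          integral_undef fun hi => hk (Finset.mem_filter.mpr ⟨Finset.mem_univ k, hi⟩)).symm
    _ = ∫ x, ∑ k ∈ T, g k x ∂μ := (integral_finsetSum T hT).symm
    _ ≤ ∫ x, G x ∂μ := by
        refine integral_mono_of_nonneg
          (Filter.Eventually.of_forall fun x => Finset.sum_nonneg fun k _ => hg k x) hG
          (Filter.Eventually.of_forall fun x => ?_)
        exact (Finset.sum_le_sum_of_subset_of_nonneg (Finset.subset_univ T)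
          fun k _ _ => hg k x).trans (hgG x)

lemma ESavg_integral_le {α : Type*} [MeasurableSpace α] {μ : Measure α}
    {g : (ι → Bool) → α → ℝ} {G : α → ℝ} (hg : ∀ s x, 0 ≤ g s x)
    (hG : Integrable G μ) (hgG : ∀ x, ESavg (fun s => g s x) ≤ G x) :
    ESavg (fun s => ∫ x, g s x ∂μ) ≤ ∫ x, G x ∂μ := by
  have hcard : (0 : ℝ) ≤ Fintype.card (ι → Bool) := Nat.cast_nonneg _
  simp only [ESavg, Finset.sum_div, ← integral_div]
  exact sum_integral_le_integral_of_nonneg (fun s x => div_nonneg (hg s x) hcard) hG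
    fun x => by simpa only [ESavg, Finset.sum_div] using hgG x

end Averages

section Network

variable {d : ℕ} {ι : Type*} [Fintype ι] [DecidableEq ι]

omit [Fintype ι] [DecidableEq ι] in
lemma dot_colScale (s : ι → Bool) (W : ι → Fin d → ℝ) (r : ι) (x : Fin d → ℝ) :
    dot (colScale s W r) x = signv s r * dot (W r) x := by
  simp only [dot, colScale, Finset.mul_sum, mul_assoc]

lemma ESavg_fL_colScale_sq (a : ι → ℝ) (W0 : ι → Fin d → ℝ) (σ' : ℝ → ℝ)
    (W : ι → Fin d → ℝ) (x : Fin d → ℝ) :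
    ESavg (fun s => fL a W0 σ' (colScale s W) x ^ 2) =
      (Fintype.card ι : ℝ)⁻¹ * ∑ r, (a r * σ' (dot (W0 r) x) * dot (W r) x) ^ 2 := by
  have hfL (s : ι → Bool) : fL a W0 σ' (colScale s W) x = (Real.sqrt (Fintype.card ι))⁻¹ *
      ∑ r, signv s r * (a r * σ' (dot (W0 r) x) * dot (W r) x) := by
    simp only [fL, dot_colScale]
    congr 1
    exact Finset.sum_congr rfl fun r _ => by ring
  simp only [hfL, mul_pow _ (∑ r, _), inv_pow, Real.sq_sqrt (Nat.cast_nonneg _), ESavg_const_mul,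
    ESavg_sq_sum_signv_mul]

lemma ESavg_fL_colScale_sq_le {a : ι → ℝ} (W0 : ι → Fin d → ℝ) {σ' : ℝ → ℝ}
    (ha : ∀ r, |a r| ≤ 1) (hσ : ∀ t, |σ' t| ≤ 1) (W : ι → Fin d → ℝ) (x : Fin d → ℝ) :
    ESavg (fun s => fL a W0 σ' (colScale s W) x ^ 2) ≤
      (Fintype.card ι : ℝ)⁻¹ * ∑ r, dot (W r) x ^ 2 := by
  rw [ESavg_fL_colScale_sq]
  refine mul_le_mul_of_nonneg_left (Finset.sum_le_sum fun r _ => ?_) (by positivity)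
  have hcoef : |a r * σ' (dot (W0 r) x)| ≤ 1 := by
    rw [abs_mul]; exact mul_le_one₀ (ha r) (abs_nonneg _) (hσ _)
  rw [mul_pow]
  exact mul_le_of_le_one_left (sq_nonneg _) ((sq_le_one_iff_abs_le_one _).mpr hcoef)

end Network

section Empirical

variable {d n : ℕ}

lemma Eemp_dot_sq (x : Fin n → Fin d → ℝ) (z : Fin d → ℝ) :
    Eemp (fun t => dot z (x t) ^ 2) =
      dot z ((Matrix.of fun i j => Eemp fun t => x t i * x t j) *ᵥ z) := by
  simp only [Eemp, dot, Matrix.mulVec, dotProduct, Matrix.of_apply, sq, Finset.mul_sum,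
    Finset.sum_mul]
  conv_rhs => rw [Finset.sum_comm]
  rw [Finset.sum_comm]
  refine Finset.sum_congr rfl fun j _ => ?_
  rw [Finset.sum_comm]
  exact Finset.sum_congr rfl fun i _ => Finset.sum_congr rfl fun t _ => by ring

lemma Eemp_dot_sq_le {x : Fin n → Fin d → ℝ} {ε : ℝ}
    (hop : ∀ z : Fin d → ℝ, |dot z ((Matrix.of (fun i j => Eemp fun t => x t i * x t j) -
      (1 : Matrix (Fin d) (Fin d) ℝ)) *ᵥ z)| ≤ ε * sq2 z) (z : Fin d → ℝ) :
    Eemp (fun t => dot z (x t) ^ 2) ≤ (1 + ε) * sq2 z := by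
  have hdot (u v : Fin d → ℝ) : dot u v = u ⬝ᵥ v := rfl
  have hsplit := (abs_le.mp (hop z)).2
  rw [hdot, Matrix.sub_mulVec, Matrix.one_mulVec, dotProduct_sub] at hsplit
  have hsq : z ⬝ᵥ z = sq2 z := Finset.sum_congr rfl fun j _ => (sq (z j)).symm
  rw [Eemp_dot_sq, hdot]
  linarith

end Empirical

section Sphere

variable {d : ℕ} {μ : Measure (Fin d → ℝ)} {c : ℝ}

lemma integral_comp_mulVec_of_mem_orthogonalGroup
    (hinv : ∀ A ∈ Matrix.orthogonalGroup (Fin d) ℝ, μ.map (fun x => A *ᵥ x) = μ)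
    {A : Matrix (Fin d) (Fin d) ℝ} (hA : A ∈ Matrix.orthogonalGroup (Fin d) ℝ)
    {g : (Fin d → ℝ) → ℝ} (hg : Measurable g) :
    ∫ x, g (A *ᵥ x) ∂μ = ∫ x, g x ∂μ := by
  have hA_meas : Measurable fun x : Fin d → ℝ => A *ᵥ x :=
    (Matrix.mulVecLin A).continuous_of_finiteDimensional.measurable
  rw [← integral_map hA_meas.aemeasurable (by rw [hinv A hA]; exact hg.aestronglyMeasurable),
    hinv A hA]

lemma integrable_coord_mul_coord (hμ : IsUniformSphere μ c) (i j : Fin d) :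
    Integrable (fun x : Fin d → ℝ => x i * x j) μ := by
  have := hμ.1
  refine Integrable.mono' (integrable_const c)
    ((measurable_pi_apply i).mul (measurable_pi_apply j)).aestronglyMeasurable ?_
  filter_upwards [hμ.2.1] with x hx
  have hcoord (k : Fin d) : x k ^ 2 ≤ c :=
    hx ▸ Finset.single_le_sum (f := fun k => x k ^ 2) (fun k _ => sq_nonneg _) (Finset.mem_univ k)
  rw [Real.norm_eq_abs, abs_le]
  constructor <;> nlinarith [hcoord i, hcoord j, sq_nonneg (x i + x j), sq_nonneg (x i - x j)]

lemma integral_coord_mul_coord_of_ne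
    (hinv : ∀ A ∈ Matrix.orthogonalGroup (Fin d) ℝ, μ.map (fun x => A *ᵥ x) = μ)
    {i j : Fin d} (hij : i ≠ j) :
    ∫ x, x i * x j ∂μ = 0 := by
  -- the reflection `x i ↦ -x i` preserves `μ` and negates the integrand
  let v : Fin d → ℝ := fun k => if k = i then -1 else 1
  have hv : Matrix.diagonal v ∈ Matrix.orthogonalGroup (Fin d) ℝ := by
    rw [Matrix.mem_orthogonalGroup_iff, Matrix.diagonal_transpose, Matrix.diagonal_mul_diagonal,
      ← Matrix.diagonal_one]
    congr 1; ext k; by_cases hk : k = i <;> simp [v, hk]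
  have key := integral_comp_mulVec_of_mem_orthogonalGroup hinv hv
    (by fun_prop : Measurable fun x : Fin d → ℝ => x i * x j)
  simp only [Matrix.mulVec_diagonal, v, if_true, if_neg (Ne.symm hij), one_mul,
    neg_mul, integral_neg] at key
  linarith

lemma integral_coord_sq_eq
    (hinv : ∀ A ∈ Matrix.orthogonalGroup (Fin d) ℝ, μ.map (fun x => A *ᵥ x) = μ) (i j : Fin d) :
    ∫ x, x i ^ 2 ∂μ = ∫ x, x j ^ 2 ∂μ := by
  let σ := Equiv.swap i j
  have hσ : σ.permMatrix ℝ ∈ Matrix.orthogonalGroup (Fin d) ℝ := by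
    rw [Matrix.mem_orthogonalGroup_iff, Matrix.transpose_permMatrix, ← Matrix.permMatrix_mul,
      inv_mul_cancel, Matrix.permMatrix_one]
  have key := integral_comp_mulVec_of_mem_orthogonalGroup hinv hσ
    (by fun_prop : Measurable fun x : Fin d → ℝ => x i ^ 2)
  simpa only [Matrix.permMatrix_mulVec, Function.comp_apply, σ, Equiv.swap_apply_left] using
    key.symm

lemma integral_coord_sq (hμ : IsUniformSphere μ c) (i : Fin d) :
    ∫ x, x i ^ 2 ∂μ = c / d := by
  have := hμ.1
  have hsum : ∑ j : Fin d, ∫ x, x j ^ 2 ∂μ = c := by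
    rw [← integral_finsetSum _ fun j _ => by
      simpa only [sq] using integrable_coord_mul_coord hμ j j]
    calc ∫ x, ∑ j, x j ^ 2 ∂μ = ∫ _, c ∂μ := integral_congr_ae hμ.2.1
      _ = c := by simp
  simp only [integral_coord_sq_eq hμ.2.2 _ i, Finset.sum_const, Finset.card_univ,
    Fintype.card_fin, nsmul_eq_mul] at hsum
  have hd : (d : ℝ) ≠ 0 := Nat.cast_ne_zero.mpr (Fin.pos i).ne'
  rw [← hsum]; field_simp

lemma dot_sq_eq_sum (w x : Fin d → ℝ) : dot w x ^ 2 = ∑ i, ∑ j, w i * w j * (x i * x j) := by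
  rw [dot, sq, Finset.sum_mul_sum]
  exact Finset.sum_congr rfl fun i _ => Finset.sum_congr rfl fun j _ => by ring

lemma integrable_dot_sq (hμ : IsUniformSphere μ c) (w : Fin d → ℝ) :
    Integrable (fun x => dot w x ^ 2) μ := by
  simp only [dot_sq_eq_sum]
  exact integrable_finsetSum _ fun i _ => integrable_finsetSum _ fun j _ =>
    (integrable_coord_mul_coord hμ i j).const_mul _

lemma integral_dot_sq (hμ : IsUniformSphere μ c) (w : Fin d → ℝ) :
    ∫ x, dot w x ^ 2 ∂μ = c / d * sq2 w := by
  have hint (i j : Fin d) := (integrable_coord_mul_coord hμ i j).const_mul (w i * w j)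
  simp only [dot_sq_eq_sum]
  rw [integral_finsetSum _ fun i _ => integrable_finsetSum _ fun j _ => hint i j]
  simp only [integral_finsetSum _ fun j _ => hint _ j, integral_const_mul]
  rw [sq2, Finset.mul_sum]
  refine Finset.sum_congr rfl fun i _ => ?_
  rw [Finset.sum_eq_single i
    (fun j _ hj => by rw [integral_coord_mul_coord_of_ne hμ.2.2 (Ne.symm hj), mul_zero])
    (fun h => absurd (Finset.mem_univ i) h)]
  simp only [← sq, integral_coord_sq hμ]
  ring

end Sphere

section SecondMoments

variable {d : ℕ} {ι : Type*} [Fintype ι] [DecidableEq ι] {a : ι → ℝ} {σ' : ℝ → ℝ}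

lemma ESavg_Eemp_fL_colScale_sq_le {n : ℕ} (W0 : ι → Fin d → ℝ) (ha : ∀ r, |a r| ≤ 1)
    (hσ : ∀ t, |σ' t| ≤ 1) {x : Fin n → Fin d → ℝ} {ε : ℝ}
    (hop : ∀ z : Fin d → ℝ, |dot z ((Matrix.of (fun i j => Eemp fun t => x t i * x t j) -
      (1 : Matrix (Fin d) (Fin d) ℝ)) *ᵥ z)| ≤ ε * sq2 z) (W : ι → Fin d → ℝ) :
    ESavg (fun s => Eemp fun i => fL a W0 σ' (colScale s W) (x i) ^ 2) ≤
      (1 + ε) * (∑ r, sq2 (W r)) / Fintype.card ι :=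
  calc ESavg (fun s => Eemp fun i => fL a W0 σ' (colScale s W) (x i) ^ 2)
      = Eemp (fun i => ESavg fun s => fL a W0 σ' (colScale s W) (x i) ^ 2) :=
        ESavg_Eemp_comm _
    _ ≤ Eemp (fun i => (Fintype.card ι : ℝ)⁻¹ * ∑ r, dot (W r) (x i) ^ 2) :=
        Eemp_mono fun i => ESavg_fL_colScale_sq_le W0 ha hσ W (x i)
    _ = (Fintype.card ι : ℝ)⁻¹ * ∑ r, Eemp (fun i => dot (W r) (x i) ^ 2) := by
        rw [Eemp_const_mul, Eemp_sum fun r i => dot (W r) (x i) ^ 2]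
    _ ≤ (Fintype.card ι : ℝ)⁻¹ * ∑ r, (1 + ε) * sq2 (W r) := by
        gcongr with r; exact Eemp_dot_sq_le hop (W r)
    _ = (1 + ε) * (∑ r, sq2 (W r)) / Fintype.card ι := by
        rw [← Finset.mul_sum]; ring

lemma ESavg_integral_fL_colScale_sq_le {μ : Measure (Fin d → ℝ)} {c : ℝ}
    (hμ : IsUniformSphere μ c) (W0 : ι → Fin d → ℝ) (ha : ∀ r, |a r| ≤ 1)
    (hσ : ∀ t, |σ' t| ≤ 1) (W : ι → Fin d → ℝ) :
    ESavg (fun s => ∫ y, fL a W0 σ' (colScale s W) y ^ 2 ∂μ) ≤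
      c / d * (∑ r, sq2 (W r)) / Fintype.card ι :=
  calc ESavg (fun s => ∫ y, fL a W0 σ' (colScale s W) y ^ 2 ∂μ)
      ≤ ∫ y, (Fintype.card ι : ℝ)⁻¹ * ∑ r, dot (W r) y ^ 2 ∂μ :=
        ESavg_integral_le (fun _ _ => sq_nonneg _)
          ((integrable_finsetSum _ fun r _ => integrable_dot_sq hμ (W r)).const_mul _)
          fun y => ESavg_fL_colScale_sq_le W0 ha hσ W y
    _ = (Fintype.card ι : ℝ)⁻¹ * ∑ r, c / d * sq2 (W r) := by
        rw [integral_const_mul, integral_finsetSum _ fun r _ => integrable_dot_sq hμ (W r)]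
        simp only [integral_dot_sq hμ]
    _ = c / d * (∑ r, sq2 (W r)) / Fintype.card ι := by
        rw [← Finset.mul_sum]; ring

end SecondMoments

/-- if the empirical second-moment matrix of the data is within `1/2` of the
identity in operator norm, then for every `W`, the expectation over a random diagonal sign
matrix `S` of both the empirical and the population second moment of `f_L(·; WS)` is at most
`C‖W‖_F²/m`. -/
theorem statement15 :
    ∃ C : ℝ, 0 < C ∧
      ∀ (d m n : ℕ) (μ : Measure (Fin d → ℝ)) (a : Fin m → ℝ)
        (W0 : Fin m → Fin d → ℝ) (σ' : ℝ → ℝ) (x : Fin n → Fin d → ℝ),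
        2 ≤ d → Even m → IsUniformSphere μ (d : ℝ) →
        (∀ r, a r = 1 ∨ a r = -1) → (∀ r, sq2 (W0 r) = 1) →
        (∀ t, |σ' t| ≤ 1) →
        (∀ i, sq2 (x i) = (d : ℝ)) →
        (∀ z : Fin d → ℝ,
          |dot z ((Matrix.of (fun i j => Eemp fun t => x t i * x t j) -
              (1 : Matrix (Fin d) (Fin d) ℝ)).mulVec z)| ≤ (1 / 2) * sq2 z) →
        ∀ W : Fin m → Fin d → ℝ,
          ESavg (fun s => Eemp fun i => (fL a W0 σ' (colScale s W) (x i)) ^ 2) ≤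
              C * (∑ r, sq2 (W r)) / m ∧
            ESavg (fun s => ∫ xx, (fL a W0 σ' (colScale s W) xx) ^ 2 ∂μ) ≤
              C * (∑ r, sq2 (W r)) / m := by
  refine ⟨3 / 2, by norm_num, ?_⟩
  intro d m n μ a W0 σ' x _ _ hμ ha _ hσ _ hop W
  have ha' (r : Fin m) : |a r| ≤ 1 := by rcases ha r with h | h <;> simp [h]
  have hemp := ESavg_Eemp_fL_colScale_sq_le W0 ha' hσ hop W
  have hpop := ESavg_integral_fL_colScale_sq_le hμ W0 ha' hσ W
  rw [Fintype.card_fin] at hemp hpop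
  refine ⟨hemp.trans_eq (by norm_num), hpop.trans ?_⟩
  have hS : 0 ≤ ∑ r, sq2 (W r) :=
    Finset.sum_nonneg fun r _ => Finset.sum_nonneg fun j _ => sq_nonneg _
  gcongr ?_ * _ / _
  linarith [div_self_le_one (d : ℝ)]

end NTKQuad
end
end
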